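/- Let p be an even natural number, π ∈ P_2(p), and g a finite simple graph on vertex set [n]. Let S(π, g) be the set of tuples i ∈ [n]^p such that ker(i) = π (i.e. i_u = i_v if and only if u and v lie in the same block of π) and such that for all u₁ < u₂ < v₁ < v₂ with u₁ ∼_π v₁, u₂ ∼_π v₂ and u₁ ≁_π u₂, the pair (i_{u₁}, i_{u₂}) is an edge of g. Then the map sending i ∈ S(π, g) to the function on the blocks of π assigning to each block its common i-value is a bijection from S(π, g) onto the set of injective graph homomorphisms from the intersection graph f_π to g. In particular |S(π, g)| equals the number of injective graph homomorphisms from f_π to g. -/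

import Mathlib

open MeasureTheory Filter Topology
open scoped Classical

namespace EpsCLT

/-- Two subsets of `Fin p` (typically blocks of a partition) *cross* if there exist
`i < k < j < l` with `i, j` in one of them and `k, l` in the other. -/
def Crosses {p : ℕ} (B₁ B₂ : Finset (Fin p)) : Prop :=
  ∃ i k j l : Fin p, i < k ∧ k < j ∧ j < l ∧
    ((i ∈ B₁ ∧ j ∈ B₁ ∧ k ∈ B₂ ∧ l ∈ B₂) ∨ (i ∈ B₂ ∧ j ∈ B₂ ∧ k ∈ B₁ ∧ l ∈ B₁))

theorem Crosses.symm {p : ℕ} {B₁ B₂ : Finset (Fin p)} (h : Crosses B₁ B₂) : Crosses B₂ B₁ := by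
  obtain ⟨i, k, j, l, h1, h2, h3, h4⟩ := h
  exact ⟨i, k, j, l, h1, h2, h3, h4.symm⟩

/-- `P` is a pair partition of `Fin p`: every block has two elements and every point lies in
exactly one block. -/
def IsPairPartition {p : ℕ} (P : Finset (Finset (Fin p))) : Prop :=
  (∀ B ∈ P, B.card = 2) ∧ ∀ i : Fin p, ∃! B, B ∈ P ∧ i ∈ B

/-- `P` is a partition of `Fin p`: blocks are nonempty and every point lies in exactly one. -/
def IsPartition {p : ℕ} (P : Finset (Finset (Fin p))) : Prop :=
  (∀ B ∈ P, B.Nonempty) ∧ ∀ i : Fin p, ∃! B, B ∈ P ∧ i ∈ B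

/-- A partition is noncrossing if no two (distinct) blocks cross. -/
def IsNoncrossing {p : ℕ} (P : Finset (Finset (Fin p))) : Prop :=
  ∀ B₁ ∈ P, ∀ B₂ ∈ P, B₁ ≠ B₂ → ¬ Crosses B₁ B₂

/-- The intersection graph `f_π` of a partition: vertices are the blocks, with an edge between
two blocks iff they cross. -/
def interGraph {p : ℕ} (P : Finset (Finset (Fin p))) : SimpleGraph {B // B ∈ P} where
  Adj B₁ B₂ := B₁ ≠ B₂ ∧ Crosses B₁.1 B₂.1
  symm := ⟨fun _ _ h => ⟨Ne.symm h.1, h.2.symm⟩⟩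
  loopless := ⟨fun _ h => h.1 rfl⟩

/-- Product over the edges of a graph (each edge counted once) of a symmetric function of the
endpoints.  The function is symmetrized, so for symmetric `F` each factor is `F u v`. -/
noncomputable def edgeProd {V : Type*} [Fintype V] (f : SimpleGraph V) (F : V → V → ℝ) : ℝ :=
  ∏ e ∈ f.edgeFinset, Sym2.lift ⟨fun u v => (F u v + F v u) / 2, fun u v => by ring⟩ e

/-- Homomorphism density `ρ(f, w)` of a finite simple graph in a graphon `w`. -/
noncomputable def density {V : Type*} [Fintype V] (f : SimpleGraph V) (w : ℝ → ℝ → ℝ) : ℝ :=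
  ∫ x in Set.univ.pi (fun _ : V => Set.Icc (0:ℝ) 1), edgeProd f (fun u v => w (x u) (x v))

/-- The step function of an `n × n` matrix: on the box `[(i-1)/n, i/n) × [(j-1)/n, j/n)`
(0-indexed: `[i/n, (i+1)/n) × [j/n, (j+1)/n)`) it takes the value `Q i j`. -/
noncomputable def stepFn {n : ℕ} (Q : Fin n → Fin n → ℝ) (x y : ℝ) : ℝ :=
  if hx : (⌊x * n⌋).toNat < n ∧ (⌊y * n⌋).toNat < n ∧ 0 ≤ x ∧ 0 ≤ y then
    Q ⟨(⌊x * n⌋).toNat, hx.1⟩ ⟨(⌊y * n⌋).toNat, hx.2.1⟩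
  else 0

/-- The step graphon `w_g` of a finite simple graph on `[n]`. -/
noncomputable def stepGraphon {n : ℕ} (g : SimpleGraph (Fin n)) : ℝ → ℝ → ℝ :=
  stepFn (fun i j => if g.Adj i j then 1 else 0)

/-- The finset of all pair partitions of `Fin p`. -/
noncomputable def pairPartitions (p : ℕ) : Finset (Finset (Finset (Fin p))) :=
  Finset.univ.filter IsPairPartition

/-- `Σ_{π ∈ P₂(p)} ρ(f_π, w)`, the `p`-th moment of the limit law `μ_w`. -/
noncomputable def momentFormula (p : ℕ) (w : ℝ → ℝ → ℝ) : ℝ :=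
  ∑ P ∈ pairPartitions p, density (interGraph P) w

/-- `g`-independence (ε-independence) of a family of unital subalgebras with respect to a state
`τ`, following Młotkowski and Speicher–Wysoczański. -/
def GIndep {A : Type*} [Ring A] [Algebra ℂ A] (τ : A →ₗ[ℂ] ℂ) {ι : Type*}
    (g : SimpleGraph ι) (B : ι → Subalgebra ℂ A) : Prop :=
  (∀ i j : ι, g.Adj i j →
      ∀ a ∈ B i, ∀ b ∈ B j, a * b = b * a ∧ τ (a * b) = τ a * τ b) ∧
  (∀ (k : ℕ) (idx : Fin k → ι),
      (∀ j₁ j₂ : Fin k, j₁ < j₂ → idx j₁ = idx j₂ →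
        ∃ j₃, j₁ < j₃ ∧ j₃ < j₂ ∧ ¬ g.Adj (idx j₁) (idx j₃)) →
      ∀ a : Fin k → A, (∀ j, a j ∈ B (idx j)) → (∀ j, τ (a j) = 0) →
        τ (List.ofFn a).prod = 0)

/-- The finset of graph homomorphisms from `f` to `g`. -/
noncomputable def homFinset {V W : Type*} [Fintype V] [Fintype W] (f : SimpleGraph V)
    (g : SimpleGraph W) : Finset (V → W) :=
  Finset.univ.filter fun φ => ∀ u v, f.Adj u v → g.Adj (φ u) (φ v)

/-- The finset of injective graph homomorphisms from `f` to `g`. -/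
noncomputable def injHomFinset {V W : Type*} [Fintype V] [Fintype W] (f : SimpleGraph V)
    (g : SimpleGraph W) : Finset (V → W) :=
  Finset.univ.filter fun φ => Function.Injective φ ∧ ∀ u v, f.Adj u v → g.Adj (φ u) (φ v)

/-- The number of graph homomorphisms `hom(f, g)`. -/
noncomputable def homCount {V W : Type*} [Fintype V] [Fintype W] (f : SimpleGraph V)
    (g : SimpleGraph W) : ℕ := (homFinset f g).card

/-- Weighted homomorphism density `ρ(f, (g, α))` of `f` in a node-weighted graph `(g, α)`. -/
noncomputable def wHomDensity {V W : Type*} [Fintype V] [Fintype W] (f : SimpleGraph V)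
    (g : SimpleGraph W) (α : W → ℝ) : ℝ :=
  (∑ φ ∈ homFinset f g, ∏ v : V, α (φ v)) / (∑ v : W, α v) ^ (Fintype.card V)

/-- Weighted injective homomorphism density `ρ_inj(f, (g, α))`. -/
noncomputable def wInjHomDensity {V W : Type*} [Fintype V] [Fintype W] (f : SimpleGraph V)
    (g : SimpleGraph W) (α : W → ℝ) : ℝ :=
  (∑ φ ∈ injHomFinset f g, ∏ v : V, α (φ v)) / (∑ v : W, α v) ^ (Fintype.card V)

/-! A tuple with kernel `π` is the same as an injective labelling `φ` of the blocks, read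
through the map `u ↦ [u]` sending a point to its block. For `idx = φ ∘ [·]` the edge condition
on `u₁ < u₂ < v₁ < v₂` says precisely that `φ` maps the crossing blocks `[u₁] ≠ [u₂]` to
adjacent vertices of `g`, i.e. that `φ` is a homomorphism from `f_π`. -/

/-- `u ∼_π v`. -/
def SameBlock {p : ℕ} (P : Finset (Finset (Fin p))) (u v : Fin p) : Prop :=
  ∃ B ∈ P, u ∈ B ∧ v ∈ B

/-- `ker idx = π`. -/
def HasKernel {p n : ℕ} (P : Finset (Finset (Fin p))) (idx : Fin p → Fin n) : Prop :=
  ∀ u v, idx u = idx v ↔ SameBlock P u v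

def EdgeCondition {p n : ℕ} (P : Finset (Finset (Fin p))) (g : SimpleGraph (Fin n))
    (idx : Fin p → Fin n) : Prop :=
  ∀ u₁ u₂ v₁ v₂ : Fin p, u₁ < u₂ → u₂ < v₁ → v₁ < v₂ →
    SameBlock P u₁ v₁ → SameBlock P u₂ v₂ → ¬ SameBlock P u₁ u₂ → g.Adj (idx u₁) (idx u₂)

def IsInjHom {V W : Type*} (f : SimpleGraph V) (g : SimpleGraph W) (φ : V → W) : Prop :=
  Function.Injective φ ∧ ∀ U V, f.Adj U V → g.Adj (φ U) (φ V)

theorem coe_injHomFinset {V W : Type*} [Fintype V] [Fintype W] (f : SimpleGraph V)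
    (g : SimpleGraph W) : (injHomFinset f g : Set (V → W)) = {φ | IsInjHom f g φ} := by
  ext φ
  simp [injHomFinset, IsInjHom]

theorem IsPairPartition.isPartition {p : ℕ} {P : Finset (Finset (Fin p))}
    (hP : IsPairPartition P) : IsPartition P :=
  ⟨fun B hB => Finset.card_pos.mp (by simp [hP.1 B hB]), hP.2⟩

namespace IsPartition

variable {p : ℕ} {P : Finset (Finset (Fin p))} (hP : IsPartition P)

noncomputable def blockOf (u : Fin p) : {B // B ∈ P} :=
  ⟨(hP.2 u).exists.choose, (hP.2 u).exists.choose_spec.1⟩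

theorem blockOf_eq_iff {u : Fin p} {B : {B // B ∈ P}} : hP.blockOf u = B ↔ u ∈ B.1 := by
  refine ⟨fun h => h ▸ (hP.2 u).exists.choose_spec.2, fun hu => Subtype.ext ?_⟩
  exact (hP.2 u).unique (hP.2 u).exists.choose_spec ⟨B.2, hu⟩

theorem mem_blockOf (u : Fin p) : u ∈ (hP.blockOf u).1 :=
  hP.blockOf_eq_iff.1 rfl

theorem mem_blockOf_iff {u v : Fin p} : v ∈ (hP.blockOf u).1 ↔ SameBlock P u v := by
  refine ⟨fun hv => ⟨_, (hP.blockOf u).2, hP.mem_blockOf u, hv⟩, ?_⟩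
  rintro ⟨B, hB, hu, hv⟩
  rwa [hP.blockOf_eq_iff (B := ⟨B, hB⟩) |>.2 hu]

theorem blockOf_eq_blockOf_iff {u v : Fin p} :
    hP.blockOf u = hP.blockOf v ↔ SameBlock P u v := by
  rw [eq_comm, blockOf_eq_iff, mem_blockOf_iff]

theorem blockOf_surjective : Function.Surjective hP.blockOf := fun B =>
  let ⟨u, hu⟩ := hP.1 B.1 B.2
  ⟨u, hP.blockOf_eq_iff.2 hu⟩

variable {n : ℕ}

theorem hasKernel_comp_blockOf_iff {φ : {B // B ∈ P} → Fin n} :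
    HasKernel P (φ ∘ hP.blockOf) ↔ Function.Injective φ := by
  simp only [HasKernel, Function.comp_apply, ← hP.blockOf_eq_blockOf_iff]
  refine ⟨fun h U V hUV => ?_, fun hφ u v => hφ.eq_iff⟩
  obtain ⟨⟨u, rfl⟩, ⟨v, rfl⟩⟩ := And.intro (hP.blockOf_surjective U) (hP.blockOf_surjective V)
  exact (h u v).1 hUV

theorem edgeCondition_comp_blockOf_iff {g : SimpleGraph (Fin n)} {φ : {B // B ∈ P} → Fin n} :
    EdgeCondition P g (φ ∘ hP.blockOf) ↔
      ∀ U V, (interGraph P).Adj U V → g.Adj (φ U) (φ V) := by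
  constructor
  · rintro h U V ⟨hne, i, k, j, l, hik, hkj, hjl, hcross⟩
    have adj_of_mem : ∀ {X Y : {B // B ∈ P}}, X ≠ Y → i ∈ X.1 → j ∈ X.1 → k ∈ Y.1 → l ∈ Y.1 →
        g.Adj (φ X) (φ Y) := by
      intro X Y hXY hi hj hk hl
      obtain rfl := hP.blockOf_eq_iff.2 hi
      obtain rfl := hP.blockOf_eq_iff.2 hk
      exact h i k j l hik hkj hjl (hP.mem_blockOf_iff.1 hj) (hP.mem_blockOf_iff.1 hl)
        (mt hP.blockOf_eq_blockOf_iff.2 hXY)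
    rcases hcross with ⟨hi, hj, hk, hl⟩ | ⟨hi, hj, hk, hl⟩
    · exact adj_of_mem hne hi hj hk hl
    · exact (adj_of_mem hne.symm hi hj hk hl).symm
  · intro h u₁ u₂ v₁ v₂ h₁₂ h₂₁ h₂₂ hv₁ hv₂ hu
    exact h _ _ ⟨mt hP.blockOf_eq_blockOf_iff.1 hu, u₁, u₂, v₁, v₂, h₁₂, h₂₁, h₂₂, Or.inl
      ⟨hP.mem_blockOf u₁, hP.mem_blockOf_iff.2 hv₁, hP.mem_blockOf u₂, hP.mem_blockOf_iff.2 hv₂⟩⟩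

variable {rep : {B // B ∈ P} → Fin p}

theorem comp_rep_comp_blockOf {idx : Fin p → Fin n} (h : HasKernel P idx)
    (hrep : ∀ B, rep B ∈ B.1) : idx ∘ rep ∘ hP.blockOf = idx :=
  funext fun u => (h _ _).2 ⟨_, (hP.blockOf u).2, hrep _, hP.mem_blockOf u⟩

include hP in
theorem bijOn_comp_rep (g : SimpleGraph (Fin n)) (hrep : ∀ B, rep B ∈ B.1) :
    Set.BijOn (· ∘ rep)
      {idx : Fin p → Fin n | HasKernel P idx ∧ EdgeCondition P g idx}
      {φ | IsInjHom (interGraph P) g φ} := by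
  refine Set.InvOn.bijOn (f' := (· ∘ hP.blockOf))
    ⟨fun idx hidx => hP.comp_rep_comp_blockOf hidx.1 hrep,
      fun φ _ => funext fun B => congrArg φ (hP.blockOf_eq_iff.2 (hrep B))⟩ ?_ ?_
  · rintro idx ⟨hker, hedge⟩
    have hidx := hP.comp_rep_comp_blockOf hker hrep
    rw [← hidx] at hker hedge
    exact ⟨hP.hasKernel_comp_blockOf_iff.1 hker, hP.edgeCondition_comp_blockOf_iff.1 hedge⟩
  · rintro φ ⟨hinj, hhom⟩
    exact ⟨hP.hasKernel_comp_blockOf_iff.2 hinj, hP.edgeCondition_comp_blockOf_iff.2 hhom⟩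

end IsPartition

/-- The tuples `i ∈ [n]^p` with `ker(i) = π` satisfying the `(g, i)`-noncrossing edge condition
are in bijection (via taking common values on blocks) with the injective graph homomorphisms
from the intersection graph `f_π` to `g`; in particular the two sets are equinumerous. -/
theorem kernel_tuples_bij_injective_homs
    {p n : ℕ} (P : Finset (Finset (Fin p))) (hP : IsPairPartition P)
    (g : SimpleGraph (Fin n)) :
    Set.BijOn
      (fun (idx : Fin p → Fin n) (B : {B // B ∈ P}) =>
        idx (B.1.min' (Finset.card_pos.mp (by have := hP.1 B.1 B.2; omega))))
      {idx : Fin p → Fin n |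
        (∀ u v : Fin p, (idx u = idx v ↔ ∃ B ∈ P, u ∈ B ∧ v ∈ B)) ∧
        (∀ u₁ u₂ v₁ v₂ : Fin p, u₁ < u₂ → u₂ < v₁ → v₁ < v₂ →
          (∃ B ∈ P, u₁ ∈ B ∧ v₁ ∈ B) → (∃ B ∈ P, u₂ ∈ B ∧ v₂ ∈ B) →
          ¬ (∃ B ∈ P, u₁ ∈ B ∧ u₂ ∈ B) → g.Adj (idx u₁) (idx u₂))}
      {φ : {B // B ∈ P} → Fin n | Function.Injective φ ∧
        ∀ U V : {B // B ∈ P}, (interGraph P).Adj U V → g.Adj (φ U) (φ V)} ∧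
    {idx : Fin p → Fin n |
        (∀ u v : Fin p, (idx u = idx v ↔ ∃ B ∈ P, u ∈ B ∧ v ∈ B)) ∧
        (∀ u₁ u₂ v₁ v₂ : Fin p, u₁ < u₂ → u₂ < v₁ → v₁ < v₂ →
          (∃ B ∈ P, u₁ ∈ B ∧ v₁ ∈ B) → (∃ B ∈ P, u₂ ∈ B ∧ v₂ ∈ B) →
          ¬ (∃ B ∈ P, u₁ ∈ B ∧ u₂ ∈ B) → g.Adj (idx u₁) (idx u₂))}.ncard =
      (injHomFinset (interGraph P) g).card := by
  have hπ := hP.isPartition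
  have hbij := hπ.bijOn_comp_rep g fun B => Finset.min'_mem B.1 (hπ.1 B.1 B.2)
  exact ⟨hbij, hbij.ncard_eq.trans (by rw [← coe_injHomFinset, Set.ncard_coe_finset])⟩

end EpsCLT
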